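/- arXiv:2507.23743 — 3 statements merged into one kernel-verified Lean document; each statement's English description precedes it below -/
import Mathlib

section
/- Consider jointly distributed mean-zero L² random variables satisfying the structural equations Y = β_u U + β_{w_y} W_Y + β_{w_z} W_Z + τ Z + ε_y, Z = γ_u U + γ_{w_y} W_Y + γ_{w_z} W_Z + ε_z, W_Y = α_u U + α_{w_z} W_Z + ε_{w_y}, W_Z = φ_u U + ε_{w_z}, where ε_y, ε_z, ε_{w_y}, ε_{w_z}, U are pairwise uncorrelated mean-zero random variables with positive variance. If γ_{w_y} = 0, α_{w_z} = 0, and β_{w_z} = 0 (the proximal assumptions), and α_u ≠ 0, γ_{w_z} ≠ 0, then the two-stage least squares proximal estimand τ_prox, defined as the population coefficient on Z in the regression of Y on Z and Ŵ_Y (where Ŵ_Y is the population linear projection of W_Y onto the span of Z and W_Z), satisfies τ_prox = τ. -/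
open Submodule RealInnerProductSpace

/-!
Under the proximal assumptions `Z` and `W_Z` lie in `span {U, ε_z, ε_{w_z}}`, which is orthogonal
to `ε_y` and `ε_{w_y}`. Eliminating `U` through `W_Y = α_u U + ε_{w_y}` gives
`Y = τ Z + c W_Y + (ε_y - (β_u / α_u) ε_{w_y})` with `c = β_u / α_u + β_{w_y}`, and replacing `W_Y`
by `Ŵ_Y` adds `c (W_Y - Ŵ_Y)`, again orthogonal to `span {Z, W_Z}`. Hence `(τ, c)` solves the
normal equations of the regression of `Y` on `(Z, Ŵ_Y)`, whose solution is unique because `Z` and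
`Ŵ_Y` are linearly independent.
-/

/-- Orthogonal projection of `A` onto the span of the finite set `S`. -/
noncomputable def projSpan {H : Type*} [NormedAddCommGroup H] [InnerProductSpace ℝ H]
    [CompleteSpace H] (S : Set H) (hS : S.Finite) (A : H) : H :=
  haveI := hS.to_subtype
  haveI : FiniteDimensional ℝ (span ℝ S) := FiniteDimensional.span_of_finite ℝ hS
  (orthogonalProjection (span ℝ S) A : H)

section Projection

variable {H : Type*} [NormedAddCommGroup H] [InnerProductSpace ℝ H] [CompleteSpace H]

lemma projSpan_mem (S : Set H) (hS : S.Finite) (A : H) : projSpan S hS A ∈ span ℝ S := by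
  have := hS.to_subtype
  have : FiniteDimensional ℝ (span ℝ S) := FiniteDimensional.span_of_finite ℝ hS
  exact SetLike.coe_mem _

lemma sub_projSpan_mem_orthogonal (S : Set H) (hS : S.Finite) (A : H) :
    A - projSpan S hS A ∈ (span ℝ S)ᗮ := by
  have := hS.to_subtype
  have : FiniteDimensional ℝ (span ℝ S) := FiniteDimensional.span_of_finite ℝ hS
  exact (span ℝ S).sub_starProjection_mem_orthogonal A

end Projection

lemma LinearIndependent.eq_of_normal_equations {𝕜 E : Type*} [RCLike 𝕜] [NormedAddCommGroup E]
    [InnerProductSpace 𝕜 E] {x y v : E} (hli : LinearIndependent 𝕜 ![x, y]) {a b a' b' : 𝕜}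
    (hx : inner 𝕜 (v - (a • x + b • y)) x = 0) (hy : inner 𝕜 (v - (a • x + b • y)) y = 0)
    (hx' : inner 𝕜 (v - (a' • x + b' • y)) x = 0) (hy' : inner 𝕜 (v - (a' • x + b' • y)) y = 0) :
    a = a' ∧ b = b' := by
  set d : E := (a' - a) • x + (b' - b) • y with hd_def
  have hd : d = (v - (a • x + b • y)) - (v - (a' • x + b' • y)) := by module
  have hdx : inner 𝕜 d x = 0 := by rw [hd, inner_sub_left, hx, hx', sub_zero]
  have hdy : inner 𝕜 d y = 0 := by rw [hd, inner_sub_left, hy, hy', sub_zero]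
  have hdd : inner 𝕜 d d = 0 := by
    nth_rw 2 [hd_def]
    rw [inner_add_right, inner_smul_right, inner_smul_right, hdx, hdy, mul_zero, mul_zero, add_zero]
  obtain ⟨ha, hb⟩ := LinearIndependent.pair_iff.1 hli _ _ (inner_self_eq_zero.1 hdd)
  exact ⟨(sub_eq_zero.1 ha).symm, (sub_eq_zero.1 hb).symm⟩

lemma isOrtho_span_noise_span_treatment_proxy {H : Type*} [NormedAddCommGroup H]
    [InnerProductSpace ℝ H]
    {Z WZ U εy εz εwy εwz : H} {γu γwz φu : ℝ}
    (hZ : Z = γu • U + γwz • WZ + εz) (hWZ : WZ = φu • U + εwz)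
    (hε : ∀ u ∈ ({εy, εwy} : Set H), ∀ v ∈ ({εz, εwz, U} : Set H), ⟪u, v⟫ = 0) :
    span ℝ {εy, εwy} ⟂ span ℝ {Z, WZ} := by
  set L := span ℝ ({εz, εwz, U} : Set H)
  have hU : U ∈ L := subset_span (by simp)
  have hWZL : WZ ∈ L := hWZ ▸ add_mem (smul_mem _ _ hU) (subset_span (by simp))
  have hZL : Z ∈ L := hZ ▸ add_mem (add_mem (smul_mem _ _ hU) (smul_mem _ _ hWZL))
    (subset_span (by simp))
  exact (isOrtho_span.2 fun u hu v hv ↦ hε u hu v hv).mono_right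
    (span_le.2 (Set.insert_subset_iff.2 ⟨hZL, Set.singleton_subset_iff.2 hWZL⟩))

theorem stmt_3_general {H : Type*} [NormedAddCommGroup H] [InnerProductSpace ℝ H] [CompleteSpace H]
    (Y Z WZ WY U εy εz εwy εwz : H)
    (τ βu βwy βwz γu γwy γwz αu αwz φu : ℝ)
    (hY : Y = βu • U + βwy • WY + βwz • WZ + τ • Z + εy)
    (hZ : Z = γu • U + γwy • WY + γwz • WZ + εz)
    (hWY : WY = αu • U + αwz • WZ + εwy)
    (hWZ : WZ = φu • U + εwz)
    (horth : ∀ i j : Fin 5, i ≠ j →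
      ⟪(![εy, εz, εwy, εwz, U]) i, (![εy, εz, εwy, εwz, U]) j⟫ = 0)
    (hγwy : γwy = 0) (hαwz : αwz = 0) (hβwz : βwz = 0)
    (hαu : αu ≠ 0)
    (Why : H)
    (hWhy : Why = projSpan {Z, WZ} (Set.toFinite _) WY)
    (hli : LinearIndependent ℝ ![Z, Why]) :
    ∀ t c : ℝ,
      ⟪Y - (t • Z + c • Why), Z⟫ = 0 →
      ⟪Y - (t • Z + c • Why), Why⟫ = 0 →
      t = τ := by
  intro t c hZeq hWeq
  subst hγwy hαwz hβwz
  set K := span ℝ ({Z, WZ} : Set H)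
  have hnoise : span ℝ {εy, εwy} ⟂ K := by
    refine isOrtho_span_noise_span_treatment_proxy (by rw [hZ, zero_smul, add_zero]) hWZ ?_
    simp only [Set.mem_insert_iff, Set.mem_singleton_iff, forall_eq_or_imp, forall_eq]
    exact ⟨⟨horth 0 1 (by decide), horth 0 3 (by decide), horth 0 4 (by decide)⟩,
      horth 2 1 (by decide), horth 2 3 (by decide), horth 2 4 (by decide)⟩
  have hWhyK : Why ∈ K := hWhy ▸ projSpan_mem _ _ _
  have hWYK : WY - Why ∈ Kᗮ := hWhy ▸ sub_projSpan_mem_orthogonal _ _ _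
  have hres : Y - (τ • Z + (βu / αu + βwy) • Why) ∈ Kᗮ := by
    have hsplit : Y - (τ • Z + (βu / αu + βwy) • Why)
        = (βu / αu + βwy) • (WY - Why) + (εy - (βu / αu) • εwy) := by
      rw [hY, hWY]
      match_scalars <;> field_simp <;> ring
    rw [hsplit]
    refine add_mem (smul_mem _ _ hWYK) (hnoise (sub_mem ?_ (smul_mem _ _ ?_))) <;>
      exact subset_span (by simp)
  exact (hli.eq_of_normal_equations (inner_left_of_mem_orthogonal (subset_span (by simp)) hres)
    (inner_left_of_mem_orthogonal hWhyK hres) hZeq hWeq).1.symm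

/-- Proposition 3 (proximal validity). Random variables are modeled as vectors in a real
Hilbert space, with inner product playing the role of the covariance of mean-zero L²
random variables. Under the proximal assumptions `γ_{w_y} = 0`, `α_{w_z} = 0`,
`β_{w_z} = 0`, with `α_u ≠ 0` and `γ_{w_z} ≠ 0`, the coefficient on `Z` in the population
regression of `Y` on `(Z, Ŵ_Y)` — characterized by the normal equations — equals `τ`,
where `Ŵ_Y` is the population linear projection of `W_Y` onto the span of `Z` and `W_Z`. -/
theorem stmt_3 {H : Type*} [NormedAddCommGroup H] [InnerProductSpace ℝ H] [CompleteSpace H]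
    (Y Z WZ WY U εy εz εwy εwz : H)
    (τ βu βwy βwz γu γwy γwz αu αwz φu : ℝ)
    (hY : Y = βu • U + βwy • WY + βwz • WZ + τ • Z + εy)
    (hZ : Z = γu • U + γwy • WY + γwz • WZ + εz)
    (hWY : WY = αu • U + αwz • WZ + εwy)
    (hWZ : WZ = φu • U + εwz)
    (horth : ∀ i j : Fin 5, i ≠ j →
      ⟪(![εy, εz, εwy, εwz, U]) i, (![εy, εz, εwy, εwz, U]) j⟫ = 0)
    (hpos : ∀ i : Fin 5, 0 < ⟪(![εy, εz, εwy, εwz, U]) i, (![εy, εz, εwy, εwz, U]) i⟫)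
    (hγwy : γwy = 0) (hαwz : αwz = 0) (hβwz : βwz = 0)
    (hαu : αu ≠ 0) (hγwz : γwz ≠ 0)
    (Why : H)
    (hWhy : Why = projSpan {Z, WZ} (Set.toFinite _) WY)
    (hli : LinearIndependent ℝ ![Z, Why]) :
    ∀ t c : ℝ,
      ⟪Y - (t • Z + c • Why), Z⟫ = 0 →
      ⟪Y - (t • Z + c • Why), Why⟫ = 0 →
      t = τ :=
  stmt_3_general Y Z WZ WY U εy εz εwy εwz τ βu βwy βwz γu γwy γwz αu αwz φu hY hZ hWY hWZ horth
    hγwy hαwz hβwz hαu Why hWhy hli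
end

section
/- Under the same structural model, if β_u γ_u = 0 (either unconfounded treatment or unconfounded outcome), then the selection-on-observables estimand τ_soo — the population coefficient on Z in the linear regression of Y on (Z, W_Z, W_Y) — satisfies τ_soo = τ. -/
/-!
Since the regressors are linearly independent, the normal equations have at most one solution,
so it suffices to exhibit one whose `Z`-coefficient is `τ`. Write
`Y - τ Z - βwz WZ - βwy WY = βu U + εy`. If `βu = 0` this residual is `εy`, orthogonal to
every regressor. If `γu = 0`, then `Z = γwy WY + γwz WZ + εz`, and the residual of
`βu U + εy` after projecting onto `span {WZ, WY}` is orthogonal to `εz`, hence to `Z` as well.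
-/

open Submodule RealInnerProductSpace

section

variable {H : Type*} [NormedAddCommGroup H] [InnerProductSpace ℝ H]

theorem LinearIndependent.eq_of_forall_inner_sub_sum_eq_zero {ι : Type*} [Fintype ι]
    {v : ι → H} (hv : LinearIndependent ℝ v) {y : H} {c d : ι → ℝ}
    (hc : ∀ j, ⟪y - ∑ i, c i • v i, v j⟫ = 0) (hd : ∀ j, ⟪y - ∑ i, d i • v i, v j⟫ = 0) :
    c = d := by
  set D := ∑ i, (d i - c i) • v i
  have hD : ∀ j, ⟪D, v j⟫ = 0 := fun j => by
    have : D = (y - ∑ i, c i • v i) - (y - ∑ i, d i • v i) := by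
      simp only [D, sub_smul, Finset.sum_sub_distrib]; abel
    rw [this, inner_sub_left, hc, hd, sub_zero]
  have hD0 : D = 0 := inner_self_eq_zero.mp <| calc
    ⟪D, D⟫ = ∑ i, (d i - c i) * ⟪D, v i⟫ := by simp only [D, inner_sum, real_inner_smul_right]
    _ = 0 := by simp [hD]
  funext i
  linarith [Fintype.linearIndependent_iff.mp hv _ hD0 i]

theorem exists_forall_inner_sub_sum_eq_zero {ι : Type*} [Fintype ι] (v : ι → H) (y : H) :
    ∃ c : ι → ℝ, ∀ j, ⟪y - ∑ i, c i • v i, v j⟫ = 0 := by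
  set K := span ℝ (Set.range v)
  have : FiniteDimensional ℝ K := FiniteDimensional.span_of_finite ℝ (Set.finite_range v)
  obtain ⟨c, hc⟩ := (mem_span_range_iff_exists_fun ℝ).mp (K.starProjection_apply_mem y)
  exact ⟨c, fun j => hc ▸ K.inner_left_of_mem_orthogonal (subset_span ⟨j, rfl⟩)
    (K.sub_starProjection_mem_orthogonal y)⟩

theorem inner_eq_zero_of_mem_span {s : Set H} {x v : H} (hs : ∀ u ∈ s, ⟪u, x⟫ = 0)
    (hv : v ∈ span ℝ s) : ⟪v, x⟫ = 0 :=
  (isOrtho_span.mpr fun u hu _ hx => (Set.mem_singleton_iff.mp hx) ▸ hs u hu).inner_eq hv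
    (mem_span_singleton_self x)

section StructuralModel

variable {Y Z WZ WY U εy εz εwy εwz : H} {τ βu βwy βwz γu γwy γwz αu αwz φu : ℝ}

theorem covariates_mem_of_eq (hWY : WY = αu • U + αwz • WZ + εwy) (hWZ : WZ = φu • U + εwz)
    {S : Submodule ℝ H} (hU : U ∈ S) (hεwz : εwz ∈ S) (hεwy : εwy ∈ S) : WZ ∈ S ∧ WY ∈ S := by
  have hWZS : WZ ∈ S := hWZ ▸ S.add_mem (S.smul_mem _ hU) hεwz
  exact ⟨hWZS, hWY ▸ S.add_mem (S.add_mem (S.smul_mem _ hU) (S.smul_mem _ hWZS)) hεwy⟩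

theorem exists_normal_equations_of_unconfounded_outcome
    (hY : Y = βwy • WY + βwz • WZ + τ • Z + εy) (hZ : Z = γu • U + γwy • WY + γwz • WZ + εz)
    (hWY : WY = αu • U + αwz • WZ + εwy) (hWZ : WZ = φu • U + εwz)
    (hεy : ∀ u ∈ ({U, εwz, εwy, εz} : Set H), ⟪u, εy⟫ = 0) :
    ∃ a b : ℝ, ⟪Y - (τ • Z + a • WZ + b • WY), Z⟫ = 0 ∧
      ⟪Y - (τ • Z + a • WZ + b • WY), WZ⟫ = 0 ∧ ⟪Y - (τ • Z + a • WZ + b • WY), WY⟫ = 0 := by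
  let S := span ℝ {U, εwz, εwy, εz}
  have hS : ∀ x ∈ ({U, εwz, εwy, εz} : Set H), x ∈ S := fun _ hx => subset_span hx
  obtain ⟨hWZS, hWYS⟩ := covariates_mem_of_eq hWY hWZ (hS _ (by simp)) (hS _ (by simp))
    (hS _ (by simp))
  have hZS : Z ∈ S := hZ ▸ S.add_mem (S.add_mem (S.add_mem (S.smul_mem _ (hS _ (by simp)))
    (S.smul_mem _ hWYS)) (S.smul_mem _ hWZS)) (hS _ (by simp))
  have hres : Y - (τ • Z + βwz • WZ + βwy • WY) = εy := by rw [hY]; module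
  refine ⟨βwz, βwy, ?_⟩
  simp only [hres, real_inner_comm _ εy]
  exact ⟨inner_eq_zero_of_mem_span hεy hZS, inner_eq_zero_of_mem_span hεy hWZS,
    inner_eq_zero_of_mem_span hεy hWYS⟩

theorem exists_normal_equations_of_unconfounded_treatment
    (hY : Y = βu • U + βwy • WY + βwz • WZ + τ • Z + εy) (hZ : Z = γwy • WY + γwz • WZ + εz)
    (hWY : WY = αu • U + αwz • WZ + εwy) (hWZ : WZ = φu • U + εwz)
    (hεz : ∀ u ∈ ({U, εwz, εwy, εy} : Set H), ⟪u, εz⟫ = 0) :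
    ∃ a b : ℝ, ⟪Y - (τ • Z + a • WZ + b • WY), Z⟫ = 0 ∧
      ⟪Y - (τ • Z + a • WZ + b • WY), WZ⟫ = 0 ∧ ⟪Y - (τ • Z + a • WZ + b • WY), WY⟫ = 0 := by
  obtain ⟨c, hc⟩ := exists_forall_inner_sub_sum_eq_zero ![WZ, WY] (βu • U + εy)
  simp only [Fin.forall_fin_two, Fin.sum_univ_two, Matrix.cons_val_zero, Matrix.cons_val_one]
    at hc
  set ρ := βu • U + εy - (c 0 • WZ + c 1 • WY)
  let S := span ℝ {U, εwz, εwy, εy}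
  have hS : ∀ x ∈ ({U, εwz, εwy, εy} : Set H), x ∈ S := fun _ hx => subset_span hx
  obtain ⟨hWZS, hWYS⟩ := covariates_mem_of_eq hWY hWZ (hS _ (by simp)) (hS _ (by simp))
    (hS _ (by simp))
  have hρS : ρ ∈ S := S.sub_mem (S.add_mem (S.smul_mem _ (hS _ (by simp))) (hS _ (by simp)))
    (S.add_mem (S.smul_mem _ hWZS) (S.smul_mem _ hWYS))
  have hres : Y - (τ • Z + (βwz + c 0) • WZ + (βwy + c 1) • WY) = ρ := by rw [hY]; module
  refine ⟨βwz + c 0, βwy + c 1, ?_⟩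
  rw [hres]
  refine ⟨?_, hc.1, hc.2⟩
  rw [hZ, inner_add_right, inner_add_right, real_inner_smul_right, real_inner_smul_right, hc.1,
    hc.2, inner_eq_zero_of_mem_span hεz hρS]
  ring

end StructuralModel

end

theorem stmt_5_general {H : Type*} [NormedAddCommGroup H] [InnerProductSpace ℝ H]
    (Y Z WZ WY U εy εz εwy εwz : H)
    (τ βu βwy βwz γu γwy γwz αu αwz φu : ℝ)
    (hY : Y = βu • U + βwy • WY + βwz • WZ + τ • Z + εy)
    (hZ : Z = γu • U + γwy • WY + γwz • WZ + εz)
    (hWY : WY = αu • U + αwz • WZ + εwy)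
    (hWZ : WZ = φu • U + εwz)
    (horth : ∀ i j : Fin 5, i ≠ j →
      ⟪(![εy, εz, εwy, εwz, U]) i, (![εy, εz, εwy, εwz, U]) j⟫ = 0)
    (hsoo : βu * γu = 0)
    (hli : LinearIndependent ℝ ![Z, WZ, WY]) :
    ∀ t a b : ℝ,
      ⟪Y - (t • Z + a • WZ + b • WY), Z⟫ = 0 →
      ⟪Y - (t • Z + a • WZ + b • WY), WZ⟫ = 0 →
      ⟪Y - (t • Z + a • WZ + b • WY), WY⟫ = 0 →
      t = τ := by
  intro t a b h1 h2 h3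
  have hεy : ∀ u ∈ ({U, εwz, εwy, εz} : Set H), ⟪u, εy⟫ = 0 := by
    simp only [Set.mem_insert_iff, Set.mem_singleton_iff, forall_eq_or_imp, forall_eq]
    exact ⟨horth 4 0 (by decide), horth 3 0 (by decide), horth 2 0 (by decide),
      horth 1 0 (by decide)⟩
  have hεz : ∀ u ∈ ({U, εwz, εwy, εy} : Set H), ⟪u, εz⟫ = 0 := by
    simp only [Set.mem_insert_iff, Set.mem_singleton_iff, forall_eq_or_imp, forall_eq]
    exact ⟨horth 4 1 (by decide), horth 3 1 (by decide), horth 2 1 (by decide),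
      horth 0 1 (by decide)⟩
  obtain ⟨a', b', g1, g2, g3⟩ : ∃ a' b' : ℝ, ⟪Y - (τ • Z + a' • WZ + b' • WY), Z⟫ = 0 ∧
      ⟪Y - (τ • Z + a' • WZ + b' • WY), WZ⟫ = 0 ∧ ⟪Y - (τ • Z + a' • WZ + b' • WY), WY⟫ = 0 := by
    rcases mul_eq_zero.mp hsoo with hβ | hγ
    · rw [hβ, zero_smul, zero_add] at hY
      exact exists_normal_equations_of_unconfounded_outcome hY hZ hWY hWZ hεy
    · rw [hγ, zero_smul, zero_add] at hZ
      exact exists_normal_equations_of_unconfounded_treatment hY hZ hWY hWZ hεz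
  have := hli.eq_of_forall_inner_sub_sum_eq_zero (c := ![t, a, b]) (d := ![τ, a', b'])
    (by simpa [Fin.forall_fin_succ, Fin.sum_univ_three] using ⟨h1, h2, h3⟩)
    (by simpa [Fin.forall_fin_succ, Fin.sum_univ_three] using ⟨g1, g2, g3⟩)
  simpa using congrFun this 0

/-- Proposition 1 (SOO validity). In the structural model (random variables as vectors in a
real Hilbert space, inner product = covariance), if `β_u γ_u = 0` (either unconfounded
treatment or unconfounded outcome), then the coefficient on `Z` in the population linear
regression of `Y` on `(Z, W_Z, W_Y)` — characterized by the normal equations, with the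
covariance matrix of `(Z, W_Z, W_Y)` invertible, i.e. the regressors linearly
independent — equals `τ`. -/
theorem stmt_5 {H : Type*} [NormedAddCommGroup H] [InnerProductSpace ℝ H] [CompleteSpace H]
    (Y Z WZ WY U εy εz εwy εwz : H)
    (τ βu βwy βwz γu γwy γwz αu αwz φu : ℝ)
    (hY : Y = βu • U + βwy • WY + βwz • WZ + τ • Z + εy)
    (hZ : Z = γu • U + γwy • WY + γwz • WZ + εz)
    (hWY : WY = αu • U + αwz • WZ + εwy)
    (hWZ : WZ = φu • U + εwz)
    (horth : ∀ i j : Fin 5, i ≠ j →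
      ⟪(![εy, εz, εwy, εwz, U]) i, (![εy, εz, εwy, εwz, U]) j⟫ = 0)
    (hpos : ∀ i : Fin 5, 0 < ⟪(![εy, εz, εwy, εwz, U]) i, (![εy, εz, εwy, εwz, U]) i⟫)
    (hsoo : βu * γu = 0)
    (hli : LinearIndependent ℝ ![Z, WZ, WY]) :
    ∀ t a b : ℝ,
      ⟪Y - (t • Z + a • WZ + b • WY), Z⟫ = 0 →
      ⟪Y - (t • Z + a • WZ + b • WY), WZ⟫ = 0 →
      ⟪Y - (t • Z + a • WZ + b • WY), WY⟫ = 0 →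
      t = τ :=
  stmt_5_general Y Z WZ WY U εy εz εwy εwz τ βu βwy βwz γu γwy γwz αu αwz φu hY hZ hWY hWZ horth
    hsoo hli
end

section
/- Let Σ be a 5×5 symmetric positive-definite matrix indexed by (Y, Z, W_Z, W_Y, U) with Σ_{UU} = 1. The map sending Σ to the four partial correlations ρ = (R_{U∼W_Z}, R_{U∼W_Y|W_Z}, R_{U∼Z|W_Y,W_Z}, R_{U∼Y|Z,W_Z,W_Y}) — holding the 4×4 submatrix of (Y,Z,W_Z,W_Y) fixed — is a bijection between positive-definite completions of Σ with Σ_{UU}=1 and the open cube (−1,1)⁴. -/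
open scoped Matrix

/-- Partial covariance `Cov(a, b ∣ s)` computed from a covariance matrix `M`:
`M a b − M_{a,s} (M_{s,s})⁻¹ M_{s,b}`. -/
noncomputable def pcov (M : Matrix (Fin 5) (Fin 5) ℝ) (a b : Fin 5)
    (s : Finset (Fin 5)) : ℝ :=
  M a b - dotProduct (fun i : {x // x ∈ s} => M a i)
    ((M.submatrix (Subtype.val : {x // x ∈ s} → Fin 5) Subtype.val)⁻¹.mulVec
      (fun j : {x // x ∈ s} => M j b))

/-- Partial correlation `R_{a∼b|s}` computed from a covariance matrix `M`. -/
noncomputable def pcorr (M : Matrix (Fin 5) (Fin 5) ℝ) (a b : Fin 5)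
    (s : Finset (Fin 5)) : ℝ :=
  pcov M a b s / Real.sqrt (pcov M a a s * pcov M b b s)

/-- The 5×5 covariance matrix of `(Y, Z, W_Z, W_Y, U)` (indices `0,1,2,3,4`) obtained by
completing the fixed 4×4 block `S0` of `(Y, Z, W_Z, W_Y)` with `Cov(U, ·) = v` and
`Var(U) = 1`. -/
noncomputable def fullCov (S0 : Matrix (Fin 4) (Fin 4) ℝ) (v : Fin 4 → ℝ) :
    Matrix (Fin 5) (Fin 5) ℝ := fun i j =>
  if hi : (i : ℕ) < 4 then
    if hj : (j : ℕ) < 4 then S0 ⟨i, hi⟩ ⟨j, hj⟩ else v ⟨i, hi⟩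
  else
    if hj : (j : ℕ) < 4 then v ⟨j, hj⟩ else 1

/-- The vector of partial correlations
`ρ = (R_{U∼W_Z}, R_{U∼W_Y|W_Z}, R_{U∼Z|W_Y,W_Z}, R_{U∼Y|Z,W_Z,W_Y})` of a completion. -/
noncomputable def rhoMap (M : Matrix (Fin 5) (Fin 5) ℝ) : Fin 4 → ℝ :=
  ![pcorr M 4 2 ∅, pcorr M 4 3 {2}, pcorr M 4 1 {3, 2}, pcorr M 4 0 {1, 2, 3}]

/-!
Partial covariances are covariances of regression residuals, and conditioning on one more
variable `c` is a Gram–Schmidt step: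
`pcov a b (insert c s) = pcov a b s - pcov a c s * pcov c b s / pcov c c s`.
Along the chain `∅ ⊂ {W_Z} ⊂ {W_Z, W_Y} ⊂ {Z, W_Z, W_Y} ⊂ {Y, Z, W_Z, W_Y}` the `k`-th
coordinate of `ρ` is `C_k / √(D_k E_k)` with `C_k = pcov U c_k s_k`, `D_k = pcov U U s_k` and
`E_k = pcov c_k c_k s_k > 0`. Here `E_k` only involves the fixed block, `D_k` only the
covariances of `U` with `s_k`, and `C_k` is `Cov(U, c_k)` plus a function of those. So the free
covariances can be solved for one at a time, with `D_{k+1} = D_k (1 - ρ_k²)`, and the completion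
is positive definite iff `D_4 > 0` (a Schur complement), i.e. iff every `ρ_k` lies in `(-1, 1)`.
-/

open Matrix Finset

abbrev Matrix.principal {n : Type*} (M : Matrix n n ℝ) (s : Finset n) : Matrix s s ℝ :=
  M.submatrix (↑) (↑)

lemma Matrix.PosDef.principal_of_subset {n : Type*} {M : Matrix n n ℝ} {s t : Finset n}
    (ht : (M.principal t).PosDef) (hst : s ⊆ t) : (M.principal s).PosDef :=
  ht.submatrix (e := fun i : s => ⟨i, hst i.2⟩) fun _ _ h =>
    Subtype.ext (congrArg Subtype.val h :)

section Support

variable {n : Type*} [Fintype n] {s : Finset n}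

lemma Matrix.dotProduct_eq_zero_of_support {u w : n → ℝ} (hu : ∀ i ∉ s, u i = 0)
    (hw : ∀ i ∈ s, w i = 0) : u ⬝ᵥ w = 0 :=
  Finset.sum_eq_zero fun i _ => by
    by_cases hi : i ∈ s <;> simp [hi, hu, hw]

lemma Matrix.PosDef.dotProduct_mulVec_pos_of_support {M : Matrix n n ℝ}
    (hs : (M.principal s).PosDef) {u : n → ℝ} (hu : ∀ i ∉ s, u i = 0) (hu0 : u ≠ 0) :
    0 < u ⬝ᵥ M *ᵥ u := by
  have hrestr : (fun i : s => u i) ≠ 0 := fun h =>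
    hu0 <| funext fun i => by
      by_cases hi : i ∈ s
      · exact congrFun h ⟨i, hi⟩
      · exact hu i hi
  have hrestr_form : star (fun i : s => u i) ⬝ᵥ M.principal s *ᵥ (fun i : s => u i)
      = u ⬝ᵥ M *ᵥ u := by
    simp only [star_trivial, dotProduct, mulVec, submatrix_apply]
    rw [Finset.sum_coe_sort s (fun i => u i * ∑ j : s, M i j * u j),
      Finset.sum_subset (subset_univ s) fun i _ hi => by simp [hu i hi]]
    refine Finset.sum_congr rfl fun i _ => ?_
    rw [Finset.sum_coe_sort s (fun j => M i j * u j),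
      Finset.sum_subset (subset_univ s) fun j _ hj => by simp [hu j hj]]
  exact hrestr_form ▸ hs.dotProduct_mulVec_pos hrestr

lemma Matrix.IsHermitian.dotProduct_mulVec_comm {M : Matrix n n ℝ} (hM : M.IsHermitian)
    (u w : n → ℝ) : u ⬝ᵥ M *ᵥ w = w ⬝ᵥ M *ᵥ u := by
  have hT : Mᵀ = M := by rw [← conjTranspose_eq_transpose_of_trivial]; exact hM.eq
  rw [dotProduct_mulVec, ← mulVec_transpose, hT, dotProduct_comm]

end Support

lemma div_sqrt_mul_mem_Ioo {c d e : ℝ} (hd : 0 < d) (he : 0 < e) (h : c ^ 2 < d * e) :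
    c / √(d * e) ∈ Set.Ioo (-1 : ℝ) 1 := by
  have hs : 0 < √(d * e) := Real.sqrt_pos.mpr (mul_pos hd he)
  rw [Set.mem_Ioo, ← abs_lt, abs_div, abs_of_pos hs, div_lt_one hs,
    Real.lt_sqrt (abs_nonneg c), sq_abs]
  exact h

section PartialCovariance

variable {M N : Matrix (Fin 5) (Fin 5) ℝ} {s : Finset (Fin 5)} {a b c : Fin 5}

/-- Coefficients, in the variables `X_0, …, X_4`, of the residual of the linear regression of
`X_b` on `(X_i)_{i ∈ s}`. -/
noncomputable def regResidual (M : Matrix (Fin 5) (Fin 5) ℝ) (s : Finset (Fin 5)) (b : Fin 5) :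
    Fin 5 → ℝ :=
  Pi.single b 1 - fun i =>
    if h : i ∈ s then ((M.principal s)⁻¹ *ᵥ fun j : s => M j b) ⟨i, h⟩ else 0

lemma regResidual_apply_of_notMem {i : Fin 5} (hi : i ∉ s) :
    regResidual M s b i = (Pi.single b 1 : Fin 5 → ℝ) i := by
  simp [regResidual, hi]

lemma regResidual_apply_self (hb : b ∉ s) : regResidual M s b b = 1 := by
  simp [regResidual_apply_of_notMem hb]

lemma pcov_eq_mulVec_regResidual : pcov M a b s = (M *ᵥ regResidual M s b) a := by
  rw [pcov, regResidual, mulVec_sub, Pi.sub_apply, mulVec_single_one]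
  congr 1
  set y := (M.principal s)⁻¹ *ᵥ fun j : s => M j b
  simp only [mulVec, dotProduct]
  calc ∑ i : s, M a i * y i
      = ∑ i : s, M a i * (if h : (i : Fin 5) ∈ s then y ⟨i, h⟩ else 0) := by simp
    _ = ∑ i ∈ s, M a i * (if h : i ∈ s then y ⟨i, h⟩ else 0) :=
      Finset.sum_coe_sort s fun i => M a i * if h : i ∈ s then y ⟨i, h⟩ else 0
    _ = _ := Finset.sum_subset (subset_univ s) fun i _ hi => by simp [hi]

lemma mulVec_regResidual_eq_zero (hs : (M.principal s).PosDef) {j : Fin 5} (hj : j ∈ s) :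
    (M *ᵥ regResidual M s b) j = 0 := by
  rw [← pcov_eq_mulVec_regResidual, pcov, sub_eq_zero]
  have hinv := mul_nonsing_inv _ ((isUnit_iff_isUnit_det _).mp hs.isUnit)
  have := congrFun (congrArg (· *ᵥ fun j : s => M j b) hinv) ⟨j, hj⟩
  simp only [← mulVec_mulVec, one_mulVec] at this
  exact this.symm

lemma eq_regResidual_of_orthogonal (hs : (M.principal s).PosDef) {r : Fin 5 → ℝ}
    (hr : ∀ i ∉ s, r i = (Pi.single b 1 : Fin 5 → ℝ) i)
    (hMr : ∀ j ∈ s, (M *ᵥ r) j = 0) :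
    r = regResidual M s b := by
  have hd : ∀ i ∉ s, (r - regResidual M s b) i = 0 := fun i hi => by
    rw [Pi.sub_apply, hr i hi, regResidual_apply_of_notMem hi, sub_self]
  have hMd : ∀ j ∈ s, (M *ᵥ (r - regResidual M s b)) j = 0 := fun j hj => by
    rw [mulVec_sub, Pi.sub_apply, hMr j hj, mulVec_regResidual_eq_zero hs hj, sub_self]
  by_contra hne
  have hpos := hs.dotProduct_mulVec_pos_of_support hd (sub_ne_zero.mpr hne)
  rw [dotProduct_eq_zero_of_support hd hMd] at hpos
  exact hpos.false

lemma dotProduct_mulVec_regResidual (hs : (M.principal s).PosDef) {u : Fin 5 → ℝ}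
    (hu : ∀ i ∉ s, u i = (Pi.single a 1 : Fin 5 → ℝ) i) :
    u ⬝ᵥ M *ᵥ regResidual M s b = pcov M a b s := by
  have hua : ∀ i ∉ s, (u - Pi.single a 1 : Fin 5 → ℝ) i = 0 := fun i hi => by
    rw [Pi.sub_apply, hu i hi, sub_self]
  rw [pcov_eq_mulVec_regResidual, ← single_one_dotProduct a (M *ᵥ regResidual M s b),
    ← sub_eq_zero, ← sub_dotProduct]
  exact dotProduct_eq_zero_of_support hua fun j hj => mulVec_regResidual_eq_zero hs hj

lemma regResidual_congr (h : ∀ i ∈ s, ∀ j ∈ insert b s, M i j = N i j) :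
    regResidual M s b = regResidual N s b := by
  have hsub : M.principal s = N.principal s :=
    Matrix.ext fun (i j : s) => h i i.2 j (mem_insert_of_mem j.2)
  have hcol : (fun j : s => M j b) = fun j : s => N j b :=
    funext fun j => h j j.2 b (mem_insert_self b s)
  rw [regResidual, regResidual, hsub, hcol]

lemma pcov_congr (h : ∀ i ∈ insert a s, ∀ j ∈ insert b s, M i j = N i j) :
    pcov M a b s = pcov N a b s := by
  rw [pcov_eq_mulVec_regResidual, pcov_eq_mulVec_regResidual,
    regResidual_congr fun i hi j hj => h i (mem_insert_of_mem hi) j hj]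
  simp only [mulVec, dotProduct]
  refine Finset.sum_congr rfl fun j _ => ?_
  by_cases hj : j ∈ insert b s
  · rw [h a (mem_insert_self a s) j hj]
  · rw [regResidual_apply_of_notMem fun hjs => hj (mem_insert_of_mem hjs),
      Pi.single_eq_of_ne fun hjb => hj (by simp [hjb]), mul_zero, mul_zero]

lemma pcorr_congr
    (h : ∀ i ∈ insert a (insert b s), ∀ j ∈ insert a (insert b s), M i j = N i j) :
    pcorr M a b s = pcorr N a b s := by
  have hsub : ∀ {x y : Fin 5}, x ∈ insert a (insert b s) → y ∈ insert a (insert b s) →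
      pcov M x y s = pcov N x y s := fun hx hy => pcov_congr fun i hi j hj =>
    h i (by rcases mem_insert.mp hi with rfl | hi <;> simp_all)
      j (by rcases mem_insert.mp hj with rfl | hj <;> simp_all)
  rw [pcorr, pcorr, hsub (by simp) (by simp), hsub (by simp) (by simp), hsub (by simp) (by simp)]

lemma pcov_empty : pcov M a b ∅ = M a b := by
  simp [pcov, dotProduct]

lemma pcov_self_pos (ht : (M.principal (insert c s)).PosDef) (hc : c ∉ s) :
    0 < pcov M c c s := by
  have hsupp : ∀ i ∉ insert c s, regResidual M s c i = 0 := fun i hi => by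
    rw [mem_insert, not_or] at hi
    rw [regResidual_apply_of_notMem hi.2, Pi.single_eq_of_ne hi.1]
  have hne : regResidual M s c ≠ 0 := fun h => by
    simpa [h] using regResidual_apply_self (M := M) hc
  rw [← dotProduct_mulVec_regResidual (ht.principal_of_subset (subset_insert c s))
    fun i hi => regResidual_apply_of_notMem hi]
  exact ht.dotProduct_mulVec_pos_of_support hsupp hne

lemma regResidual_insert (ht : (M.principal (insert c s)).PosDef) (hc : c ∉ s) :
    regResidual M (insert c s) b =
      regResidual M s b - (pcov M c b s / pcov M c c s) • regResidual M s c := by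
  have hs := ht.principal_of_subset (subset_insert c s)
  have hE := (pcov_self_pos ht hc).ne'
  refine (eq_regResidual_of_orthogonal ht (fun i hi => ?_) fun j hj => ?_).symm
  · rw [mem_insert, not_or] at hi
    simp [regResidual_apply_of_notMem hi.2, Pi.single_eq_of_ne hi.1]
  · rw [mulVec_sub, mulVec_smul, Pi.sub_apply, Pi.smul_apply, smul_eq_mul]
    rcases mem_insert.mp hj with rfl | hj
    · rw [← pcov_eq_mulVec_regResidual, ← pcov_eq_mulVec_regResidual]
      field_simp
      ring
    · simp [mulVec_regResidual_eq_zero hs hj]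

lemma pcov_insert (ht : (M.principal (insert c s)).PosDef) (hc : c ∉ s) :
    pcov M a b (insert c s) = pcov M a b s - pcov M a c s * pcov M c b s / pcov M c c s := by
  rw [pcov_eq_mulVec_regResidual, regResidual_insert ht hc, mulVec_sub, mulVec_smul,
    Pi.sub_apply, Pi.smul_apply, smul_eq_mul, ← pcov_eq_mulVec_regResidual,
    ← pcov_eq_mulVec_regResidual]
  ring

lemma pcov_comm (hM : M.IsHermitian) (hs : (M.principal s).PosDef) :
    pcov M a b s = pcov M b a s := by
  rw [← dotProduct_mulVec_regResidual hs fun i hi => regResidual_apply_of_notMem hi,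
    ← dotProduct_mulVec_regResidual hs fun i hi => regResidual_apply_of_notMem hi,
    hM.dotProduct_mulVec_comm]

lemma posDef_of_pcov_pos (hM : M.IsHermitian) (hs : (M.principal (univ.erase a)).PosDef)
    (h : 0 < pcov M a a (univ.erase a)) : M.PosDef := by
  set s := univ.erase a
  set r := regResidual M s a
  have hra : r a = 1 := regResidual_apply_self (notMem_erase a univ)
  refine posDef_iff_dotProduct_mulVec.mpr ⟨hM, fun z hz => ?_⟩
  rw [star_trivial]
  set w := z - z a • r
  have hw : ∀ i ∉ s, w i = 0 := fun i hi => by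
    obtain rfl : i = a := by simpa [s] using hi
    simp [w, hra]
  have hwr : w ⬝ᵥ M *ᵥ r = 0 :=
    dotProduct_eq_zero_of_support hw fun j hj => mulVec_regResidual_eq_zero hs hj
  have hrr : r ⬝ᵥ M *ᵥ r = pcov M a a s :=
    dotProduct_mulVec_regResidual hs fun i hi => regResidual_apply_of_notMem hi
  have hdecomp : z ⬝ᵥ M *ᵥ z = w ⬝ᵥ M *ᵥ w + z a ^ 2 * pcov M a a s := by
    have hz : z = w + z a • r := by simp [w]
    rw [hz, mulVec_add, mulVec_smul, add_dotProduct, dotProduct_add, dotProduct_add,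
      smul_dotProduct, smul_dotProduct, dotProduct_smul, dotProduct_smul,
      hM.dotProduct_mulVec_comm r w, hwr, hrr, ← hz]
    simp only [smul_eq_mul]
    ring
  rw [hdecomp]
  by_cases hza : z a = 0
  · have hwz : w = z := by simp [w, hza]
    rw [hza, hwz]
    simpa using hs.dotProduct_mulVec_pos_of_support (hwz ▸ hw) hz
  · have hww : 0 ≤ w ⬝ᵥ M *ᵥ w := by
      by_cases hw0 : w = 0
      · simp [hw0]
      · exact (hs.dotProduct_mulVec_pos_of_support hw hw0).le
    have := mul_pos (sq_pos_of_ne_zero hza) h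
    linarith

lemma pcorr_mem_Ioo (hM : M.PosDef) (hab : a ≠ b) (ha : a ∉ s) (hb : b ∉ s) :
    pcorr M a b s ∈ Set.Ioo (-1 : ℝ) 1 := by
  have hpd : ∀ t : Finset (Fin 5), (M.principal t).PosDef :=
    fun t => hM.submatrix Subtype.val_injective
  have hD := pcov_self_pos (hpd _) ha
  have hE := pcov_self_pos (hpd _) hb
  have hDb := pcov_self_pos (hpd _) (c := a) (s := insert b s) (by simp [hab, ha])
  rw [pcov_insert (hpd _) hb, pcov_comm hM.isHermitian (hpd s) (a := b), sub_pos,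
    ← sq, div_lt_iff₀ hE] at hDb
  exact div_sqrt_mul_mem_Ioo hD hE hDb

end PartialCovariance

section Completion

variable {S0 : Matrix (Fin 4) (Fin 4) ℝ} {v w : Fin 4 → ℝ}

@[simp] lemma Fin.castSucc_ne_four (k : Fin 4) : k.castSucc ≠ 4 := Fin.castSucc_ne_last k

@[simp] lemma fullCov_castSucc_castSucc (i j : Fin 4) :
    fullCov S0 v i.castSucc j.castSucc = S0 i j := by
  simp [fullCov]

@[simp] lemma fullCov_castSucc_last (i : Fin 4) : fullCov S0 v i.castSucc 4 = v i := by
  simp [fullCov]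

@[simp] lemma fullCov_last_castSucc (j : Fin 4) : fullCov S0 v 4 j.castSucc = v j := by
  simp [fullCov]

@[simp] lemma fullCov_last_last : fullCov S0 v 4 4 = 1 := by
  simp [fullCov]

lemma fullCov_isHermitian (hS0 : S0.IsHermitian) : (fullCov S0 v).IsHermitian := by
  have hsym : ∀ i j, S0 j i = S0 i j := fun i j => by simpa using hS0.apply i j
  ext i j
  cases i using Fin.lastCases <;> cases j using Fin.lastCases <;> simp [hsym]

lemma posDef_principal_fullCov (hS0 : S0.PosDef) {s : Finset (Fin 5)} (hs : 4 ∉ s) :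
    ((fullCov S0 v).principal s).PosDef := by
  have hne : ∀ i : s, (i : Fin 5) ≠ 4 := fun i h => hs (h ▸ i.2)
  convert hS0.submatrix (e := fun i : s => (i : Fin 5).castPred (hne i)) fun i j h =>
    Subtype.ext (Fin.castPred_inj.mp h) using 1
  ext i j
  conv_lhs => rw [principal, submatrix_apply, ← Fin.castSucc_castPred _ (hne i),
    ← Fin.castSucc_castPred _ (hne j), fullCov_castSucc_castSucc]
  rfl

lemma fullCov_apply_congr {t : Finset (Fin 5)} (hvw : ∀ k : Fin 4, k.castSucc ∈ t → v k = w k)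
    {i j : Fin 5} (hi : i ∈ insert 4 t) (hj : j ∈ insert 4 t) :
    fullCov S0 v i j = fullCov S0 w i j := by
  cases i using Fin.lastCases <;> cases j using Fin.lastCases <;> simp_all

lemma fullCov_apply_of_ne {i j : Fin 5} (hi : i ≠ 4) (hj : j ≠ 4) :
    fullCov S0 v i j = fullCov S0 w i j := by
  cases i using Fin.lastCases <;> cases j using Fin.lastCases <;> simp_all

variable {s : Finset (Fin 5)} {c : Fin 4}

lemma pcov_fullCov_last_sub (hU : 4 ∉ s) (hc : c.castSucc ∉ s)
    (hvw : ∀ k : Fin 4, k.castSucc ∈ s → v k = w k) :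
    pcov (fullCov S0 v) 4 c.castSucc s - pcov (fullCov S0 w) 4 c.castSucc s = v c - w c := by
  have hr : regResidual (fullCov S0 w) s c.castSucc = regResidual (fullCov S0 v) s c.castSucc :=
    regResidual_congr fun i hi j hj => fullCov_apply_of_ne (fun h => hU (h ▸ hi))
      (fun h => by rcases mem_insert.mp hj with rfl | hj <;> simp_all)
  rw [pcov_eq_mulVec_regResidual, pcov_eq_mulVec_regResidual, hr, ← Pi.sub_apply, ← sub_mulVec,
    mulVec, dotProduct, Fin.sum_univ_castSucc, Finset.sum_eq_single c]
  · simp [regResidual_apply_self hc]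
  · intro k _ hkc
    by_cases hk : k.castSucc ∈ s
    · simp [hvw k hk]
    · simp [regResidual_apply_of_notMem hk, Fin.castSucc_inj, hkc]
  · simp

lemma pcov_fullCov_last_last_congr (hvw : ∀ k : Fin 4, k.castSucc ∈ s → v k = w k) :
    pcov (fullCov S0 v) 4 4 s = pcov (fullCov S0 w) 4 4 s :=
  pcov_congr fun _ hi _ hj => fullCov_apply_congr hvw hi hj

lemma pcov_fullCov_castSucc_congr (hU : 4 ∉ s) :
    pcov (fullCov S0 v) c.castSucc c.castSucc s = pcov (fullCov S0 w) c.castSucc c.castSucc s := by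
  have hne : ∀ i ∈ insert c.castSucc s, i ≠ 4 := fun i hi h => by
    rcases mem_insert.mp hi with rfl | hi <;> simp_all
  exact pcov_congr fun i hi j hj => fullCov_apply_of_ne (hne i hi) (hne j hj)

lemma pcorr_fullCov_update {d : Fin 4} (hd : d.castSucc ∉ insert c.castSucc s) (x : ℝ) :
    pcorr (fullCov S0 (Function.update v d x)) 4 c.castSucc s =
      pcorr (fullCov S0 v) 4 c.castSucc s :=
  pcorr_congr fun _ hi _ hj => fullCov_apply_congr (t := insert c.castSucc s)
    (fun _ hk => Function.update_of_ne (fun h => hd (by rwa [← h])) _ _) hi hj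

lemma eqOn_insert_of_pcorr_fullCov_eq (hS0 : S0.PosDef) (hU : 4 ∉ s) (hc : c.castSucc ∉ s)
    (hv : (fullCov S0 v).PosDef) (hvw : ∀ k : Fin 4, k.castSucc ∈ s → v k = w k)
    (h : pcorr (fullCov S0 v) 4 c.castSucc s = pcorr (fullCov S0 w) 4 c.castSucc s) :
    ∀ k : Fin 4, k.castSucc ∈ insert c.castSucc s → v k = w k := by
  have hD := pcov_self_pos (hv.submatrix Subtype.val_injective) hU
  have hE := pcov_self_pos
    (posDef_principal_fullCov (v := v) hS0 (by simp [hU, (Fin.castSucc_ne_four c).symm])) hc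
  rw [pcorr, pcorr, ← pcov_fullCov_last_last_congr hvw,
    ← pcov_fullCov_castSucc_congr (v := v) (w := w) hU,
    div_left_inj' (Real.sqrt_pos.mpr (mul_pos hD hE)).ne', ← sub_eq_zero,
    pcov_fullCov_last_sub hU hc hvw, sub_eq_zero] at h
  intro k hk
  rcases mem_insert.mp hk with hk | hk
  · rwa [Fin.castSucc_inj.mp hk]
  · exact hvw k hk

lemma exists_update_pcorr_fullCov_eq (hS0 : S0.PosDef) (hU : 4 ∉ s) (hc : c.castSucc ∉ s)
    (hD : 0 < pcov (fullCov S0 v) 4 4 s) {ρ : ℝ} (hρ : ρ ∈ Set.Ioo (-1 : ℝ) 1) :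
    ∃ x, pcorr (fullCov S0 (Function.update v c x)) 4 c.castSucc s = ρ ∧
      0 < pcov (fullCov S0 (Function.update v c x)) 4 4 (insert c.castSucc s) := by
  set D := pcov (fullCov S0 v) 4 4 s
  set E := pcov (fullCov S0 v) c.castSucc c.castSucc s
  set C := pcov (fullCov S0 v) 4 c.castSucc s
  have hUc : 4 ∉ insert c.castSucc s := by simp [hU, (Fin.castSucc_ne_four c).symm]
  have hE : 0 < E := pcov_self_pos (posDef_principal_fullCov hS0 hUc) hc
  have hDE : 0 < √(D * E) := Real.sqrt_pos.mpr (mul_pos hD hE)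
  refine ⟨v c + ρ * √(D * E) - C, ?_⟩
  set v' := Function.update v c (v c + ρ * √(D * E) - C)
  have hv'v : ∀ k : Fin 4, k.castSucc ∈ s → v' k = v k := fun k hk =>
    Function.update_of_ne (fun h => hc (by rwa [← h])) _ _
  have hD' : pcov (fullCov S0 v') 4 4 s = D := pcov_fullCov_last_last_congr hv'v
  have hE' : pcov (fullCov S0 v') c.castSucc c.castSucc s = E := pcov_fullCov_castSucc_congr hU
  have hC' : pcov (fullCov S0 v') 4 c.castSucc s = ρ * √(D * E) := by
    have := pcov_fullCov_last_sub (S0 := S0) hU hc hv'v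
    simp only [v', Function.update_self] at this
    linarith
  refine ⟨by rw [pcorr, hD', hE', hC', mul_div_cancel_right₀ _ hDE.ne'], ?_⟩
  have h1 : 0 < 1 - ρ ^ 2 := by nlinarith [hρ.1, hρ.2]
  calc 0 < D * (1 - ρ ^ 2) := mul_pos hD h1
    _ = D - (ρ * √(D * E)) ^ 2 / E := by
      rw [mul_pow, Real.sq_sqrt (mul_pos hD hE).le]
      field_simp
    _ = _ := by
      rw [pcov_insert (posDef_principal_fullCov hS0 hUc) hc,
        pcov_comm (fullCov_isHermitian hS0.isHermitian) (posDef_principal_fullCov hS0 hU)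
          (a := c.castSucc), hD', hE', hC', sq]

end Completion

section Parametrization

variable {S0 : Matrix (Fin 4) (Fin 4) ℝ}

lemma mapsTo_rhoMap_fullCov :
    Set.MapsTo (fun v : Fin 4 → ℝ => rhoMap (fullCov S0 v)) {v | (fullCov S0 v).PosDef}
      {ρ | ∀ i, ρ i ∈ Set.Ioo (-1 : ℝ) 1} := fun v hv i => by
  fin_cases i <;> exact pcorr_mem_Ioo hv (by decide) (by decide) (by decide)

lemma injOn_rhoMap_fullCov (hS0 : S0.PosDef) :
    Set.InjOn (fun v : Fin 4 → ℝ => rhoMap (fullCov S0 v)) {v | (fullCov S0 v).PosDef} := by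
  intro v hv w _ hvw
  have hinsert : insert (Fin.castSucc 1) {3, 2} = ({1, 2, 3} : Finset (Fin 5)) := by decide
  have h := congrFun hvw
  have e₀ := eqOn_insert_of_pcorr_fullCov_eq hS0 (s := ∅) (c := 2) (by decide) (by decide) hv
    (by simp) (h 0)
  have e₁ := eqOn_insert_of_pcorr_fullCov_eq hS0 (s := {2}) (c := 3) (by decide) (by decide) hv
    (by simpa using e₀) (h 1)
  have e₂ := eqOn_insert_of_pcorr_fullCov_eq hS0 (s := {3, 2}) (c := 1) (by decide) (by decide)
    hv e₁ (h 2)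
  have e₃ := eqOn_insert_of_pcorr_fullCov_eq hS0 (s := {1, 2, 3}) (c := 0) (by decide)
    (by decide) hv (hinsert ▸ e₂) (h 3)
  exact funext fun k => e₃ k (by fin_cases k <;> decide)

lemma surjOn_rhoMap_fullCov (hS0 : S0.PosDef) :
    Set.SurjOn (fun v : Fin 4 → ℝ => rhoMap (fullCov S0 v)) {v | (fullCov S0 v).PosDef}
      {ρ | ∀ i, ρ i ∈ Set.Ioo (-1 : ℝ) 1} := by
  intro ρ hρ
  have hinsert : insert (Fin.castSucc 1) {3, 2} = ({1, 2, 3} : Finset (Fin 5)) := by decide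
  obtain ⟨x₀, hρ₀, hD₁⟩ := exists_update_pcorr_fullCov_eq hS0 (s := ∅) (c := 2)
    (v := 0) (by decide) (by decide) (by simp [pcov_empty]) (hρ 0)
  obtain ⟨x₁, hρ₁, hD₂⟩ := exists_update_pcorr_fullCov_eq hS0 (s := {2}) (c := 3)
    (by decide) (by decide) (by simpa using hD₁) (hρ 1)
  obtain ⟨x₂, hρ₂, hD₃⟩ := exists_update_pcorr_fullCov_eq hS0 (s := {3, 2}) (c := 1)
    (by decide) (by decide) hD₂ (hρ 2)
  obtain ⟨x₃, hρ₃, hD₄⟩ := exists_update_pcorr_fullCov_eq hS0 (s := {1, 2, 3}) (c := 0)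
    (by decide) (by decide) (hinsert ▸ hD₃) (hρ 3)
  have hall : insert (Fin.castSucc 0) {1, 2, 3} = univ.erase (4 : Fin 5) := by decide
  refine ⟨_, posDef_of_pcov_pos (fullCov_isHermitian hS0.isHermitian)
    (posDef_principal_fullCov hS0 (by decide)) (hall ▸ hD₄), funext fun k => ?_⟩
  fin_cases k
  · exact (pcorr_fullCov_update (by decide) _).trans <|
      (pcorr_fullCov_update (by decide) _).trans <|
      (pcorr_fullCov_update (by decide) _).trans hρ₀
  · exact (pcorr_fullCov_update (by decide) _).trans <|
      (pcorr_fullCov_update (by decide) _).trans hρ₁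
  · exact (pcorr_fullCov_update (by decide) _).trans hρ₂
  · exact hρ₃

end Parametrization

/-- Lewandowski–Kurowicka–Joe parametrization: fixing a positive-definite 4×4 covariance
block `S0` of `(Y, Z, W_Z, W_Y)` and `Var(U) = 1`, the map sending the free covariances
`v = Cov(U, ·)` of a positive-definite completion to the partial correlations
`ρ = (R_{U∼W_Z}, R_{U∼W_Y|W_Z}, R_{U∼Z|W_Y,W_Z}, R_{U∼Y|Z,W_Z,W_Y})` is a bijection onto
the open cube `(−1, 1)⁴`. -/
theorem stmt_19 (S0 : Matrix (Fin 4) (Fin 4) ℝ) (hS0 : S0.PosDef) :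
    Set.BijOn (fun v : Fin 4 → ℝ => rhoMap (fullCov S0 v))
      {v : Fin 4 → ℝ | (fullCov S0 v).PosDef}
      {ρ : Fin 4 → ℝ | ∀ i, ρ i ∈ Set.Ioo (-1 : ℝ) 1} :=
  ⟨mapsTo_rhoMap_fullCov, injOn_rhoMap_fullCov hS0, surjOn_rhoMap_fullCov hS0⟩
end
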